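/- arXiv:2204.09231 — 4 statements merged into one kernel-verified Lean document; each statement's English description precedes it below -/
import Mathlib

section
/- Let S be the n×m block matrix S = [S₁ S₂; I_{m−k} 0; 0 I_k], where S₁ is (n−m)×(m−k) and S₂ is (n−m)×k. Let Ŝ₁ = [S₁; I_{m−k}] (an (n−k)×(m−k) matrix) and let W_ν be an (n−k)×(n−k) symmetric positive definite matrix. Define Ĝ₁ = (Ŝ₁ᵀ W_ν⁻¹ Ŝ₁)⁻¹ Ŝ₁ᵀ W_ν⁻¹ and Ĝ = [Ĝ₁ 0_{(m−k)×k}; 0_{k×(n−k)} I_k] · (I_n − [0 S₂; 0 0]), where the zero-padded block [0 S₂; 0 0] has S₂ occupying the top-right (n−m)×k block. Then Ĝ S = I_m. -/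
/-!
Subtracting `P` removes the immutable series' contribution `S₂ u`, so `(I - P) S` is block
diagonal with blocks `Ŝ₁` and `I`. The block `Ĝ₁` is the generalized least-squares left inverse
of `Ŝ₁`, which exists because the identity block makes `Ŝ₁` injective and hence its
`W_ν⁻¹`-Gram matrix positive definite.
-/

open Matrix

lemma fromRows_one_mulVec_injective {m n R : Type*} [Fintype n] [DecidableEq n] [Semiring R]
    (A : Matrix m n R) : Function.Injective (fromRows A (1 : Matrix n n R)).mulVec := by
  intro x y hxy
  funext j
  simpa [fromRows_mulVec] using congrFun hxy (Sum.inr j)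

open scoped ComplexOrder in
lemma gls_mul_self_eq_one {n m 𝕜 : Type*} [Fintype n] [Fintype m] [DecidableEq n]
    [DecidableEq m] [RCLike 𝕜] {W : Matrix n n 𝕜} (hW : W.PosDef) {A : Matrix n m 𝕜}
    (hA : Function.Injective A.mulVec) :
    (Aᴴ * W⁻¹ * A)⁻¹ * Aᴴ * W⁻¹ * A = 1 := by
  have hGram : (Aᴴ * W⁻¹ * A).PosDef := hW.inv.conjTranspose_mul_mul_same hA
  rw [Matrix.mul_assoc, Matrix.mul_assoc, ← Matrix.mul_assoc Aᴴ]
  exact nonsing_inv_mul _ ((isUnit_iff_isUnit_det _).mp hGram.isUnit)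

lemma one_sub_fromBlocks_mul_fromBlocks {l m n α : Type*} [Fintype l] [Fintype m]
    [DecidableEq l] [DecidableEq m] [Ring α] (A : Matrix l n α) (B : Matrix l m α) :
    (1 - fromBlocks 0 B 0 0 : Matrix (l ⊕ m) (l ⊕ m) α) *
        (fromBlocks A B 0 1 : Matrix (l ⊕ m) (n ⊕ m) α) = fromBlocks A 0 0 1 := by
  rw [Matrix.sub_mul, Matrix.one_mul, fromBlocks_multiply, sub_eq_iff_eq_add, fromBlocks_add]
  simp

/-- Series are indexed by `(Fin p ⊕ Fin q) ⊕ Fin k` with `p = n − m`, `q = m − k`, and the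
columns of `S` by `Fin q ⊕ Fin k`. -/
theorem stmt2 {p q k : ℕ}
    (S₁ : Matrix (Fin p) (Fin q) ℝ) (S₂ : Matrix (Fin p) (Fin k) ℝ)
    (Wν : Matrix (Fin p ⊕ Fin q) (Fin p ⊕ Fin q) ℝ) (hWν : Wν.PosDef) :
    let S : Matrix ((Fin p ⊕ Fin q) ⊕ Fin k) (Fin q ⊕ Fin k) ℝ :=
      fromBlocks (fromRows S₁ 1) (fromRows S₂ 0) 0 1
    let Sc₁ : Matrix (Fin p ⊕ Fin q) (Fin q) ℝ := fromRows S₁ 1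
    let G₁ : Matrix (Fin q) (Fin p ⊕ Fin q) ℝ :=
      (Sc₁ᵀ * Wν⁻¹ * Sc₁)⁻¹ * Sc₁ᵀ * Wν⁻¹
    let P : Matrix ((Fin p ⊕ Fin q) ⊕ Fin k) ((Fin p ⊕ Fin q) ⊕ Fin k) ℝ :=
      fromBlocks 0 (fromRows S₂ 0) 0 0
    let G : Matrix (Fin q ⊕ Fin k) ((Fin p ⊕ Fin q) ⊕ Fin k) ℝ :=
      fromBlocks G₁ 0 0 1 * (1 - P)
    G * S = 1 := by
  intro S Sc₁ G₁ P G
  have hG₁ : G₁ * Sc₁ = 1 := by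
    simpa only [conjTranspose_eq_transpose_of_trivial] using
      gls_mul_self_eq_one hWν (fromRows_one_mulVec_injective S₁)
  calc G * S = fromBlocks G₁ 0 0 1 * ((1 - P) * S) := Matrix.mul_assoc _ _ _
    _ = fromBlocks G₁ 0 0 1 * fromBlocks Sc₁ 0 0 1 :=
      congrArg _ (one_sub_fromBlocks_mul_fromBlocks _ _)
    _ = 1 := by simp [fromBlocks_multiply, hG₁, ← fromBlocks_one]
end

section
/- With S and Ĝ as in the immutable reconciliation construction (S = [S₁ S₂; I 0; 0 I], Ĝ built from Ĝ₁ = (Ŝ₁ᵀ W_ν⁻¹ Ŝ₁)⁻¹ Ŝ₁ᵀ W_ν⁻¹), if the base forecast vector ŷ is a random vector with E[ŷ] = Sβ for some β ∈ ℝᵐ, then E[S Ĝ ŷ] = S β; that is, immutable-constrained reconciliation preserves unbiasedness. -/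
/-!
Unbiasedness is preserved because `Ĝ S = 1`: then `S Ĝ` fixes every coherent vector `S β`, and
expectation commutes with the linear map `S Ĝ`. The identity `Ĝ S = 1` holds blockwise: removing
the immutable contribution `S₂ u` leaves `diag(Ŝ₁, 1)`, and `Ĝ₁` is a left inverse of `Ŝ₁` as the
generalised least squares estimator of a design matrix `Ŝ₁ = [S₁; 1]` of full column rank.
-/

open Matrix MeasureTheory

namespace Matrix

variable {m n l : Type*}

theorem mulVec_injective_fromRows_one {R : Type*} [Semiring R] [Fintype n] [DecidableEq n]
    (A : Matrix m n R) : Function.Injective (fromRows A (1 : Matrix n n R)).mulVec :=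
  fun x y h => by simpa [fromRows_mulVec] using congrArg (fun v => v ∘ Sum.inr) h

theorem inv_transpose_mul_inv_mul_transpose_mul_inv_mul_self {K : Type*} [Field K]
    [PartialOrder K] [StarRing K] [StarOrderedRing K] [TrivialStar K]
    [Fintype m] [Fintype n] [DecidableEq m] [DecidableEq n] {W : Matrix m m K} (hW : W.PosDef)
    {B : Matrix m n K} (hB : Function.Injective B.mulVec) :
    (Bᵀ * W⁻¹ * B)⁻¹ * Bᵀ * W⁻¹ * B = 1 := by
  have hgram : (Bᵀ * W⁻¹ * B).PosDef := by
    simpa [conjTranspose_eq_transpose_of_trivial] using hW.inv.conjTranspose_mul_mul_same hB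
  rw [Matrix.mul_assoc _ _ B, Matrix.mul_assoc, ← Matrix.mul_assoc Bᵀ,
    nonsing_inv_mul _ ((isUnit_iff_isUnit_det _).mp hgram.isUnit)]

theorem fromBlocks_mul_one_sub_mul_fromBlocks {R : Type*} [Ring R]
    [Fintype m] [Fintype n] [Fintype l] [DecidableEq m] [DecidableEq n] [DecidableEq l]
    {G₁ : Matrix n m R} {A : Matrix m n R} (B : Matrix m l R) (h : G₁ * A = 1) :
    (fromBlocks G₁ 0 0 1 : Matrix (n ⊕ l) (m ⊕ l) R) *
      (1 - fromBlocks 0 B 0 0 : Matrix (m ⊕ l) (m ⊕ l) R) *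
      (fromBlocks A B 0 1 : Matrix (m ⊕ l) (n ⊕ l) R) = 1 := by
  have hproj : (1 - fromBlocks 0 B 0 0 : Matrix (m ⊕ l) (m ⊕ l) R) *
      (fromBlocks A B 0 1 : Matrix (m ⊕ l) (n ⊕ l) R) = fromBlocks A 0 0 1 := by
    rw [Matrix.sub_mul, Matrix.one_mul, fromBlocks_multiply]
    ext (i | i) (j | j) <;> simp
  rw [Matrix.mul_assoc, hproj, fromBlocks_multiply, h]
  simp [fromBlocks_one]

theorem integral_mulVec_apply {𝕜 : Type*} [RCLike 𝕜] {Ω : Type*} [MeasurableSpace Ω]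
    [Fintype n] {μ : Measure Ω} (M : Matrix m n 𝕜) {Y : Ω → n → 𝕜}
    (hY : ∀ j, Integrable (fun ω => Y ω j) μ) (i : m) :
    ∫ ω, (M *ᵥ Y ω) i ∂μ = (M *ᵥ fun j => ∫ ω, Y ω j ∂μ) i := by
  simp only [mulVec, dotProduct]
  rw [integral_finsetSum _ fun j _ => (hY j).const_mul _]
  exact Finset.sum_congr rfl fun j _ => integral_const_mul _ _

end Matrix

/-- Immutable-constrained reconciliation preserves unbiasedness:
if `E[yh] = S β` then `E[S Ĝ yh] = S β`. -/
theorem stmt3 {p q k : ℕ}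
    (S₁ : Matrix (Fin p) (Fin q) ℝ) (S₂ : Matrix (Fin p) (Fin k) ℝ)
    (Wν : Matrix (Fin p ⊕ Fin q) (Fin p ⊕ Fin q) ℝ) (hWν : Wν.PosDef)
    {Ω : Type*} [MeasureSpace Ω]
    (yh : Ω → ((Fin p ⊕ Fin q) ⊕ Fin k) → ℝ) (β : Fin q ⊕ Fin k → ℝ)
    (hint : ∀ i, Integrable (fun ω => yh ω i)) :
    let S : Matrix ((Fin p ⊕ Fin q) ⊕ Fin k) (Fin q ⊕ Fin k) ℝ :=
      fromBlocks (fromRows S₁ 1) (fromRows S₂ 0) 0 1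
    let Sc₁ : Matrix (Fin p ⊕ Fin q) (Fin q) ℝ := fromRows S₁ 1
    let G₁ : Matrix (Fin q) (Fin p ⊕ Fin q) ℝ :=
      (Sc₁ᵀ * Wν⁻¹ * Sc₁)⁻¹ * Sc₁ᵀ * Wν⁻¹
    let P : Matrix ((Fin p ⊕ Fin q) ⊕ Fin k) ((Fin p ⊕ Fin q) ⊕ Fin k) ℝ :=
      fromBlocks 0 (fromRows S₂ 0) 0 0
    let G : Matrix (Fin q ⊕ Fin k) ((Fin p ⊕ Fin q) ⊕ Fin k) ℝ :=
      fromBlocks G₁ 0 0 1 * (1 - P)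
    (∀ i, (∫ ω, yh ω i) = S.mulVec β i) →
      ∀ i, (∫ ω, (S * G).mulVec (yh ω) i) = S.mulVec β i := by
  intro S Sc₁ G₁ P G hmean i
  have hG₁ : G₁ * Sc₁ = 1 :=
    inv_transpose_mul_inv_mul_transpose_mul_inv_mul_self hWν (mulVec_injective_fromRows_one S₁)
  have hGS : G * S = 1 := fromBlocks_mul_one_sub_mul_fromBlocks _ hG₁
  rw [integral_mulVec_apply _ hint, funext hmean, mulVec_mulVec, Matrix.mul_assoc, hGS,
    Matrix.mul_one]
end

section
/- Let W be an n×n symmetric positive definite matrix, S an n×m matrix of full column rank, and G₁, G₂ two m×n matrices with G₁S = G₂S = I_m. If a random vector ε has mean zero and covariance V = W⁻¹, then the covariance of SGε, in the Loewner order, is minimized over all such G at G = (SᵀWS)⁻¹SᵀW; i.e., for every G with GS = I, S G V Gᵀ Sᵀ ⪰ S Ĝ V Ĝᵀ Sᵀ where Ĝ = (SᵀV⁻¹S)⁻¹SᵀV⁻¹, with ⪰ denoting that the difference is positive semidefinite. -/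
/-!
Full column rank makes `SᵀV⁻¹S` positive definite, hence invertible, and then
`Ĝ V Gᵀ = (SᵀV⁻¹S)⁻¹` for every `G` with `G S = I`. Hence `Ĝ V (G - Ĝ)ᵀ = 0`, so
`G V Gᵀ = Ĝ V Ĝᵀ + (G - Ĝ) V (G - Ĝ)ᵀ` with a positive semidefinite second term, and
conjugation by `S` preserves positive semidefiniteness.
-/

open Matrix

namespace Matrix

variable {ι κ R : Type*}

theorem mulVec_injective_of_rank_eq_card [Fintype κ] [Field R] {A : Matrix ι κ R}
    (h : A.rank = Fintype.card κ) : Function.Injective A.mulVec := by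
  rw [mulVec_injective_iff, linearIndependent_iff_card_eq_finrank_span, ← h,
    rank_eq_finrank_span_cols]
  rfl

section CommRing

variable [CommRing R] [Fintype ι]

theorem mul_mul_transpose_sub_eq_of_orthogonal {V : Matrix ι ι R} (hV : V.IsSymm)
    {G H : Matrix κ ι R} (h : H * V * (G - H)ᵀ = 0) :
    G * V * Gᵀ - H * V * Hᵀ = (G - H) * V * (G - H)ᵀ := by
  have h' : (G - H) * V * Hᵀ = 0 := by
    simpa only [transpose_mul, transpose_transpose, hV.eq, Matrix.mul_assoc, transpose_zero]
      using congrArg transpose h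
  obtain ⟨D, rfl⟩ : ∃ D, G = H + D := ⟨G - H, by abel⟩
  simp only [add_sub_cancel_left] at h h' ⊢
  simp only [Matrix.add_mul, Matrix.mul_add, transpose_add, h, h']
  abel

variable [Fintype κ] [DecidableEq ι] [DecidableEq κ]

/-- The MinT (generalized least squares) reconciliation matrix `Ĝ`. -/
noncomputable def glsMatrix (S : Matrix ι κ R) (V : Matrix ι ι R) : Matrix κ ι R :=
  (Sᵀ * V⁻¹ * S)⁻¹ * Sᵀ * V⁻¹

variable {S : Matrix ι κ R} {V : Matrix ι ι R}

theorem glsMatrix_mul_self (hA : IsUnit (Sᵀ * V⁻¹ * S).det) : glsMatrix S V * S = 1 := by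
  rw [glsMatrix, Matrix.mul_assoc (_ * Sᵀ), Matrix.mul_assoc _ Sᵀ, ← Matrix.mul_assoc Sᵀ,
    nonsing_inv_mul _ hA]

theorem glsMatrix_mul_mul_transpose (hV : IsUnit V.det) {G : Matrix κ ι R} (hG : G * S = 1) :
    glsMatrix S V * V * Gᵀ = (Sᵀ * V⁻¹ * S)⁻¹ := by
  rw [glsMatrix, Matrix.mul_assoc _ V⁻¹, nonsing_inv_mul _ hV, Matrix.mul_one,
    Matrix.mul_assoc, ← transpose_mul, hG, transpose_one, Matrix.mul_one]

end CommRing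

theorem posSemidef_mul_mul_transpose_sub_glsMatrix {S : Matrix ι κ ℝ} {V : Matrix ι ι ℝ}
    [Fintype ι] [Fintype κ] [DecidableEq ι] [DecidableEq κ] (hV : V.PosDef)
    (hS : Function.Injective S.mulVec)
    {G : Matrix κ ι ℝ} (hG : G * S = 1) :
    (G * V * Gᵀ - glsMatrix S V * V * (glsMatrix S V)ᵀ).PosSemidef := by
  have hVdet : IsUnit V.det := hV.isUnit.map detMonoidHom
  have hA : (Sᵀ * V⁻¹ * S).PosDef := by
    simpa only [conjTranspose_eq_transpose_of_trivial] using hV.inv.conjTranspose_mul_mul_same hS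
  have hGls := glsMatrix_mul_self (hA.isUnit.map detMonoidHom)
  have horth : glsMatrix S V * V * (G - glsMatrix S V)ᵀ = 0 := by
    rw [transpose_sub, Matrix.mul_sub, glsMatrix_mul_mul_transpose hVdet hG,
      glsMatrix_mul_mul_transpose hVdet hGls, sub_self]
  rw [mul_mul_transpose_sub_eq_of_orthogonal (isHermitian_iff_isSymm.mp hV.isHermitian) horth]
  simpa only [conjTranspose_eq_transpose_of_trivial]
    using hV.posSemidef.mul_mul_conjTranspose_same (G - glsMatrix S V)

end Matrix

/-- MinT optimality: among all `G` with `G S = I`, the reconciled error covariance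
`S G V Gᵀ Sᵀ` is minimized in the Loewner order at `Ĝ = (SᵀV⁻¹S)⁻¹SᵀV⁻¹`. -/
theorem stmt16 {n m : ℕ} (S : Matrix (Fin n) (Fin m) ℝ) (hS : S.rank = m)
    (V : Matrix (Fin n) (Fin n) ℝ) (hV : V.PosDef) :
    let Gh : Matrix (Fin m) (Fin n) ℝ := (Sᵀ * V⁻¹ * S)⁻¹ * Sᵀ * V⁻¹
    ∀ G : Matrix (Fin m) (Fin n) ℝ, G * S = 1 →
      (S * G * V * Gᵀ * Sᵀ - S * Gh * V * Ghᵀ * Sᵀ).PosSemidef := by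
  intro Gh G hG
  have hSinj := mulVec_injective_of_rank_eq_card (hS.trans (Fintype.card_fin m).symm)
  have hPsd :=
    (posSemidef_mul_mul_transpose_sub_glsMatrix hV hSinj hG).mul_mul_conjTranspose_same S
  rw [conjTranspose_eq_transpose_of_trivial, Matrix.mul_sub, Matrix.sub_mul] at hPsd
  change (S * G * V * Gᵀ * Sᵀ - S * glsMatrix S V * V * (glsMatrix S V)ᵀ * Sᵀ).PosSemidef
  simpa only [Matrix.mul_assoc] using hPsd
end

section
/- Let S = [S₁ S₂; I_{m−k} 0; 0 I_k] and suppose W (n×n, symmetric positive definite) is block diagonal as W = diag(W_ν, W_u) where W_ν is the (n−k)×(n−k) block for the mutable series (w, v) and W_u the k×k block for the immutable series u. Then the solution ṽ of the equality-constrained problem min_{ỹ} (ŷ−ỹ)ᵀW⁻¹(ŷ−ỹ) subject to ũ = û and w̃ = S₁ṽ + S₂ũ equals the solution of the reduced unconstrained GLS problem min_{ṽ} (ν̌ − Ŝ₁ṽ)ᵀW_ν⁻¹(ν̌ − Ŝ₁ṽ), where ν̌ = (ŵ − S₂û; v̂) and Ŝ₁ = [S₁; I_{m−k}]. -/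
open Matrix

/-- With block-diagonal `W = diag(Wν, Wu)`, the equality-constrained reconciliation
problem (immutability `ũ = û` and aggregation `w̃ = S₁ṽ + S₂ũ` substituted) reduces to
the unconstrained GLS problem in `ṽ`: the objectives coincide and so do the minimizers. -/
theorem stmt17 {p q k : ℕ}
    (S₁ : Matrix (Fin p) (Fin q) ℝ) (S₂ : Matrix (Fin p) (Fin k) ℝ)
    (Wν : Matrix (Fin p ⊕ Fin q) (Fin p ⊕ Fin q) ℝ) (hWν : Wν.PosDef)
    (Wu : Matrix (Fin k) (Fin k) ℝ) (hWu : Wu.PosDef)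
    (wh : Fin p → ℝ) (vh : Fin q → ℝ) (uh : Fin k → ℝ) :
    let W : Matrix ((Fin p ⊕ Fin q) ⊕ Fin k) ((Fin p ⊕ Fin q) ⊕ Fin k) ℝ :=
      fromBlocks Wν 0 0 Wu
    let yh : ((Fin p ⊕ Fin q) ⊕ Fin k) → ℝ := Sum.elim (Sum.elim wh vh) uh
    let Sc₁ : Matrix (Fin p ⊕ Fin q) (Fin q) ℝ := fromRows S₁ 1
    let νc : (Fin p ⊕ Fin q) → ℝ := Sum.elim (wh - S₂.mulVec uh) vh
    -- full objective at the feasible point determined by `ṽ` (with `ũ = û`,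
    -- `w̃ = S₁ṽ + S₂û`)
    let F : (Fin q → ℝ) → ℝ := fun vt =>
      let yt : ((Fin p ⊕ Fin q) ⊕ Fin k) → ℝ :=
        Sum.elim (Sum.elim (S₁.mulVec vt + S₂.mulVec uh) vt) uh
      (yh - yt) ⬝ᵥ (W⁻¹).mulVec (yh - yt)
    -- reduced GLS objective
    let f : (Fin q → ℝ) → ℝ := fun vt =>
      (νc - Sc₁.mulVec vt) ⬝ᵥ (Wν⁻¹).mulVec (νc - Sc₁.mulVec vt)
    (∀ vt, F vt = f vt) ∧
    ∀ vstar : Fin q → ℝ, (∀ vt, F vstar ≤ F vt) ↔ (∀ vt, f vstar ≤ f vt) := by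
  intro W yh Sc₁ νc F f
  have hW : W⁻¹ = fromBlocks Wν⁻¹ 0 0 Wu⁻¹ := by
    apply inv_eq_right_inv
    rw [Matrix.fromBlocks_multiply]
    simp [Matrix.mul_nonsing_inv _ (isUnit_iff_ne_zero.mpr hWν.det_pos.ne'),
          Matrix.mul_nonsing_inv _ (isUnit_iff_ne_zero.mpr hWu.det_pos.ne'),
          ← Matrix.fromBlocks_one]
  have hFf : ∀ vt, F vt = f vt := by
    intro vt
    set d : (Fin p ⊕ Fin q) → ℝ :=
      Sum.elim (wh - S₂.mulVec uh - S₁.mulVec vt) (vh - vt) with hd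
    have h1 : yh - (Sum.elim (Sum.elim (S₁.mulVec vt + S₂.mulVec uh) vt) uh)
        = Sum.elim d 0 := by
      funext x
      rcases x with (x | x) | x <;> simp [yh, hd] <;> ring
    have h2 : νc - Sc₁.mulVec vt = d := by
      funext x
      rcases x with x | x <;>
        simp [νc, Sc₁, hd, Matrix.fromRows_mulVec] <;> ring
    show (yh - _) ⬝ᵥ (W⁻¹).mulVec (yh - _) = _
    rw [h1, hW]
    show _ = (νc - Sc₁.mulVec vt) ⬝ᵥ (Wν⁻¹).mulVec (νc - Sc₁.mulVec vt)
    rw [h2, Matrix.fromBlocks_mulVec]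
    simp [sumElim_dotProduct_sumElim]
  refine ⟨hFf, fun vstar => ?_⟩
  simp only [hFf]
end
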